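/- Let r > 0 and let (P,D) be a unit-disk MinGMConn instance with radius r, i.e. D = {(p,q) ∈ P × P : x(p) < x(q), ‖p−q‖₁ ≤ r}. Fix offsets a,b ∈ ℝ such that no point of P lies on any of the grid lines {x = a + i·r/2 : i ∈ ℤ} and {y = b + j·r/2 : j ∈ ℤ}, and let the grid cells be the open squares between consecutive grid lines. Define the projection set S₂ = {(a + i·r/2, y(p)) : p ∈ P, i ∈ ℤ, |x(p) − (a + i·r/2)| ≤ r} ∪ {(x(p), b + j·r/2) : p ∈ P, j ∈ ℤ, |y(p) − (b + j·r/2)| ≤ r}. For every grid cell C containing a point of P, let Q_C be a feasible solution for the instance (P ∩ C, D ∩ (C × C)). Then the set S₂ ∪ ⋃_C Q_C is a feasible solution for (P,D). -/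

import Mathlib

abbrev Pt := ℝ × ℝ
abbrev Dem := Pt × Pt

noncomputable section

/-- ℓ1 distance in the plane. -/
def dist1 (p q : Pt) : ℝ := |p.1 - q.1| + |p.2 - q.2|

/-- Two points are aligned if they are vertically or horizontally aligned. -/
def Aligned (p q : Pt) : Prop := p.1 = q.1 ∨ p.2 = q.2

/-- `p` and `q` are Manhattan-connected in the point set `S`: the Manhattan graph on `S`
contains a rectilinear path from `p` to `q` of total length `‖p - q‖₁`. -/
def MConnected (S : Set Pt) (p q : Pt) : Prop :=
  ∃ (k : ℕ) (f : Fin (k + 1) → Pt),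
    f 0 = p ∧ f (Fin.last k) = q ∧ (∀ i, f i ∈ S) ∧
    (∀ i : Fin k, Aligned (f i.castSucc) (f i.succ)) ∧
    (∑ i : Fin k, dist1 (f i.castSucc) (f i.succ)) = dist1 p q

/-- `Q` is a feasible solution for the instance `(P, D)`. -/
def MFeasible (P : Set Pt) (D : Set Dem) (Q : Set Pt) : Prop :=
  ∀ d ∈ D, MConnected (P ∪ Q) d.1 d.2

/-- Minimum cardinality of a feasible solution. -/
def optN (P : Set Pt) (D : Set Dem) : ℕ :=
  sInf {n | ∃ Q : Finset Pt, MFeasible P D ↑Q ∧ Q.card = n}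

/-- The closed axis-aligned rectangle spanned by `p` and `q`. -/
def Rect (p q : Pt) : Set Pt :=
  {z | min p.1 q.1 ≤ z.1 ∧ z.1 ≤ max p.1 q.1 ∧ min p.2 q.2 ≤ z.2 ∧ z.2 ≤ max p.2 q.2}

/-- The interior of the axis-aligned rectangle spanned by `p` and `q`. -/
def RectInt (p q : Pt) : Set Pt :=
  {z | min p.1 q.1 < z.1 ∧ z.1 < max p.1 q.1 ∧ min p.2 q.2 < z.2 ∧ z.2 < max p.2 q.2}

/-- The four corners of the rectangle spanned by `p` and `q`. -/
def Corners (p q : Pt) : Set Pt := {(p.1, p.2), (p.1, q.2), (q.1, p.2), (q.1, q.2)}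

/-- Two demand rectangles are non-conflicting if neither contains a corner of the other
in its interior. -/
def NonConflicting (d e : Dem) : Prop :=
  (∀ c ∈ Corners e.1 e.2, c ∉ RectInt d.1 d.2) ∧
  (∀ c ∈ Corners d.1 d.2, c ∉ RectInt e.1 e.2)

/-- `IRN D` : maximum cardinality of an independent (pairwise non-conflicting) subset of `D`. -/
def IRN (D : Set Dem) : ℕ :=
  sSup {n | ∃ D' : Finset Dem, ↑D' ⊆ D ∧ D'.card = n ∧
    ∀ d ∈ D', ∀ e ∈ D', d ≠ e → NonConflicting d e}

/-- The vertical segment at `x = a` spanning the `y`-range between `y1` and `y2`. -/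
def VSeg (a y1 y2 : ℝ) : Set Pt :=
  {z | z.1 = a ∧ min y1 y2 ≤ z.2 ∧ z.2 ≤ max y1 y2}

/-- A finite set of demands is vertically separable: its demand rectangles can be ordered
`R₁, …, R_k` with vertical segments `ℓ₁, …, ℓ_k`, where `ℓᵢ` connects the interior of the top
boundary of `Rᵢ` with the interior of its bottom boundary and avoids `R_j` for all `j > i`. -/
def VertSeparable (D' : Finset Dem) : Prop :=
  ∃ (e : Fin D'.card → Dem) (a : Fin D'.card → ℝ),
    Function.Injective e ∧ (∀ i, e i ∈ D') ∧
    (∀ i, min (e i).1.1 (e i).2.1 < a i ∧ a i < max (e i).1.1 (e i).2.1) ∧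
    ∀ i j : Fin D'.card, i < j →
      VSeg (a i) (e i).1.2 (e i).2.2 ∩ Rect (e j).1 (e j).2 = ∅

/-- `VSN D` : maximum cardinality of a vertically separable subset of `D`. -/
def VSN (D : Set Dem) : ℕ :=
  sSup {n | ∃ D' : Finset Dem, ↑D' ⊆ D ∧ D'.card = n ∧ VertSeparable D'}

/-- `λ(p,q)` : the left vertical side of the demand rectangle `R(p,q)`. -/
def LSeg (d : Dem) : Set Pt := VSeg d.1.1 d.1.2 d.2.2

/-- `ρ(p,q)` : the right vertical side of the demand rectangle `R(p,q)`. -/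
def RSeg (d : Dem) : Set Pt := VSeg d.2.1 d.1.2 d.2.2

/-- A left boundary independent set: the left sides are pairwise non-overlapping. -/
def LeftBIS (D' : Finset Dem) : Prop :=
  ∀ d ∈ D', ∀ e ∈ D', d ≠ e → Set.Subsingleton (LSeg d ∩ LSeg e)

/-- A right boundary independent set: the right sides are pairwise non-overlapping. -/
def RightBIS (D' : Finset Dem) : Prop :=
  ∀ d ∈ D', ∀ e ∈ D', d ≠ e → Set.Subsingleton (RSeg d ∩ RSeg e)

/-- `ISN D` : maximum cardinality of a (left or right) boundary independent subset of `D`. -/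
def ISN (D : Set Dem) : ℕ :=
  sSup {n | ∃ D' : Finset Dem, ↑D' ⊆ D ∧ D'.card = n ∧ (LeftBIS D' ∨ RightBIS D')}

/-- `(P, D)` is a MinGMConn instance: demands are between input points, ordered by
`x`-coordinate. -/
def IsInstance (P : Finset Pt) (D : Finset Dem) : Prop :=
  ∀ d ∈ D, d.1 ∈ P ∧ d.2 ∈ P ∧ d.1.1 < d.2.1

/-- The points of `P` have pairwise distinct `x`-coordinates. -/
def DistinctX (P : Finset Pt) : Prop := ∀ p ∈ P, ∀ q ∈ P, p ≠ q → p.1 ≠ q.1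

/-- The points of `P` have pairwise distinct `y`-coordinates. -/
def DistinctY (P : Finset Pt) : Prop := ∀ p ∈ P, ∀ q ∈ P, p ≠ q → p.2 ≠ q.2

end

noncomputable section

/-- The `i`-th open vertical strip determined by boundaries `b` (with `b 0 = ⊥`, `b s = ⊤`). -/
def strip (s : ℕ) (b : Fin (s + 1) → EReal) (i : Fin s) : Set Pt :=
  {z | b i.castSucc < (z.1 : EReal) ∧ (z.1 : EReal) < b i.succ}

/-- `b` describes a strip subdivision into `s` vertical strips via `s - 1` vertical lines,
none of which passes through a point of `P`. -/
def IsStripSubdivision (s : ℕ) (b : Fin (s + 1) → EReal) (P : Finset Pt) : Prop :=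
  1 ≤ s ∧ StrictMono b ∧ b 0 = ⊥ ∧ b (Fin.last s) = ⊤ ∧
    ∀ p ∈ P, ∀ i : Fin (s + 1), (p.1 : EReal) ≠ b i

/-- The projections `π_𝒮(P)` of the points of `P` onto the adjacent strip boundaries. -/
def stripProj (s : ℕ) (b : Fin (s + 1) → EReal) (P : Set Pt) : Set Pt :=
  {z | ∃ p ∈ P, ∃ i : Fin s, p ∈ strip s b i ∧
    ((i.val ≠ 0 ∧ z = ((b i.castSucc).toReal, p.2)) ∨
     (i.val + 1 ≠ s ∧ z = ((b i.succ).toReal, p.2)))}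

/-- The demand set `π_𝒮(D)` of the inter-strip instance: demands between points in
different, non-adjacent strips, projected to the adjacent strip boundaries. -/
def stripDem (s : ℕ) (b : Fin (s + 1) → EReal) (D : Set Dem) : Set Dem :=
  {d | ∃ pq ∈ D, ∃ i j : Fin s,
    pq.1 ∈ strip s b i ∧ pq.2 ∈ strip s b j ∧ i.val + 2 ≤ j.val ∧
    d = (((b i.succ).toReal, pq.1.2), ((b j.castSucc).toReal, pq.2.2))}

/-- `p 0, …, p n` form a triangular instance of size `n` :
`x`-coordinates strictly increasing, while `p 1, …, p n` form a descending diagonal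
lying to the top-right of `p 0`. -/
def IsTriangular (n : ℕ) (p : Fin (n + 1) → Pt) : Prop :=
  (∀ i j : Fin (n + 1), i < j → (p i).1 < (p j).1) ∧
  (∀ i j : Fin (n + 1), i ≠ 0 → i < j → (p j).2 < (p i).2) ∧
  (∀ i : Fin (n + 1), i ≠ 0 → (p 0).2 < (p i).2)

/-- The point set of a triangular instance. -/
def triP (n : ℕ) (p : Fin (n + 1) → Pt) : Finset Pt := Finset.image p Finset.univ

/-- The demand set of a triangular instance: `(p 0, p i)` for `1 ≤ i ≤ n`. -/
def triD (n : ℕ) (p : Fin (n + 1) → Pt) : Finset Dem :=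
  Finset.image (fun i => (p 0, p i)) (Finset.univ.filter fun i : Fin (n + 1) => i ≠ 0)

/-- The triangular grid of a triangular instance. -/
def triGrid (n : ℕ) (p : Fin (n + 1) → Pt) : Set Pt :=
  {z | (∃ i, z.1 = (p i).1) ∧ (∃ j, z.2 = (p j).2) ∧
    ∃ i : Fin (n + 1), i ≠ 0 ∧ z ∈ Rect (p 0) (p i)}

/-- `Q` is arboreally satisfied: for every non-aligned pair of its points, the rectangle
they span contains a third point of `Q`. -/
def ArboreallySatisfied (Q : Finset Pt) : Prop :=
  ∀ p ∈ Q, ∀ q ∈ Q, ¬ Aligned p q → ∃ r ∈ Q, r ≠ p ∧ r ≠ q ∧ r ∈ Rect p q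

/-- The Manhattan graph on a finite point set `S`. -/
def manhattanGraph (S : Finset Pt) : SimpleGraph {x : Pt // x ∈ S} where
  Adj a b := a ≠ b ∧ Aligned a.1 b.1
  symm := ⟨fun _ _ h => ⟨h.1.symm, h.2.imp Eq.symm Eq.symm⟩⟩
  loopless := ⟨fun _ h => h.1 rfl⟩

/-- The demand graph of an instance `(P, D)`. -/
def demandGraph (P : Finset Pt) (D : Finset Dem) : SimpleGraph {x : Pt // x ∈ P} where
  Adj a b := a ≠ b ∧ (((a : Pt), (b : Pt)) ∈ D ∨ ((b : Pt), (a : Pt)) ∈ D)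
  symm := ⟨fun _ _ h => ⟨h.1.symm, h.2.symm⟩⟩
  loopless := ⟨fun _ h => h.1 rfl⟩

/-- `C` is an axis-aligned rectangle: a product of two intervals. -/
def IsAxisRect (C : Set Pt) : Prop :=
  ∃ I J : Set ℝ, I.OrdConnected ∧ J.OrdConnected ∧ C = I ×ˢ J

end

/-! A demand `(p, q)` has `‖p - q‖₁ ≤ r`. If `p` and `q` lie in different grid columns, some
vertical grid line `x = g` separates them; both `p` and `q` are within `r` of it, so their
projections `(g, y(p))` and `(g, y(q))` belong to `S₂`, and the staircase
`p → (g, y(p)) → (g, y(q)) → q` is a monotone path. Different rows are handled by a horizontal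
grid line in the same way, and a demand inside one cell is served by that cell's solution. -/

lemma MConnected.mono {S T : Set Pt} (hST : S ⊆ T) {p q : Pt} (h : MConnected S p q) :
    MConnected T p q := by
  obtain ⟨k, f, h0, hlast, hS, haligned, hlen⟩ := h
  exact ⟨k, f, h0, hlast, fun i => hST (hS i), haligned, hlen⟩

lemma mconnected_of_path₃ {S : Set Pt} {p u v q : Pt} (hp : p ∈ S) (hu : u ∈ S) (hv : v ∈ S)
    (hq : q ∈ S) (hpu : Aligned p u) (huv : Aligned u v) (hvq : Aligned v q)
    (hlen : dist1 p u + dist1 u v + dist1 v q = dist1 p q) :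
    MConnected S p q := by
  refine ⟨3, ![p, u, v, q], rfl, rfl, ?_, ?_, ?_⟩
  · intro i; fin_cases i <;> assumption
  · intro i; fin_cases i <;> assumption
  · simpa [Fin.sum_univ_three] using hlen

lemma abs_sub_add_abs_sub_of_mem_uIcc {x y z : ℝ} (h : y ∈ Set.uIcc x z) :
    |x - y| + |y - z| = |x - z| := by
  simp only [← Real.dist_eq]
  exact dist_add_dist_of_mem_segment (segment_eq_uIcc x z ▸ h)

lemma mconnected_via_vertical {S : Set Pt} {p q : Pt} {g : ℝ} (hg : g ∈ Set.uIcc p.1 q.1)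
    (hp : p ∈ S) (hq : q ∈ S) (hpg : (g, p.2) ∈ S) (hqg : (g, q.2) ∈ S) :
    MConnected S p q := by
  refine mconnected_of_path₃ hp hpg hqg hq (Or.inr rfl) (Or.inl rfl) (Or.inr rfl) ?_
  simp only [dist1, sub_self, abs_zero, ← abs_sub_add_abs_sub_of_mem_uIcc hg]
  ring

lemma mconnected_via_horizontal {S : Set Pt} {p q : Pt} {h : ℝ} (hh : h ∈ Set.uIcc p.2 q.2)
    (hp : p ∈ S) (hq : q ∈ S) (hph : (p.1, h) ∈ S) (hqh : (q.1, h) ∈ S) :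
    MConnected S p q := by
  refine mconnected_of_path₃ hp hph hqh hq (Or.inl rfl) (Or.inr rfl) (Or.inl rfl) ?_
  simp only [dist1, sub_self, abs_zero, ← abs_sub_add_abs_sub_of_mem_uIcc hh]
  ring

lemma abs_sub_le_of_mem_uIcc {x y z : ℝ} (h : y ∈ Set.uIcc x z) :
    |x - y| ≤ |x - z| ∧ |z - y| ≤ |x - z| := by
  rw [abs_sub_comm x y, abs_sub_comm x z]
  exact ⟨Set.abs_sub_left_of_mem_uIcc h, abs_sub_comm z y ▸ Set.abs_sub_right_of_mem_uIcc h⟩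

lemma abs_fst_sub_le_dist1_of_mem_uIcc {p q : Pt} {g : ℝ} (hg : g ∈ Set.uIcc p.1 q.1) :
    |p.1 - g| ≤ dist1 p q ∧ |q.1 - g| ≤ dist1 p q :=
  have hle : |p.1 - q.1| ≤ dist1 p q := le_add_of_nonneg_right (abs_nonneg _)
  ⟨(abs_sub_le_of_mem_uIcc hg).1.trans hle, (abs_sub_le_of_mem_uIcc hg).2.trans hle⟩

lemma abs_snd_sub_le_dist1_of_mem_uIcc {p q : Pt} {h : ℝ} (hh : h ∈ Set.uIcc p.2 q.2) :
    |p.2 - h| ≤ dist1 p q ∧ |q.2 - h| ≤ dist1 p q :=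
  have hle : |p.2 - q.2| ≤ dist1 p q := le_add_of_nonneg_left (abs_nonneg _)
  ⟨(abs_sub_le_of_mem_uIcc hh).1.trans hle, (abs_sub_le_of_mem_uIcc hh).2.trans hle⟩

section Grid

variable {c w : ℝ}

lemma grid_floor_mul_le (hw : 0 < w) (x : ℝ) : c + ⌊(x - c) / w⌋ * w ≤ x := by
  have := mul_le_mul_of_nonneg_right (Int.floor_le ((x - c) / w)) hw.le
  rw [div_mul_cancel₀ _ hw.ne'] at this
  linarith

lemma lt_grid_floor_add_one_mul (hw : 0 < w) (x : ℝ) : x < c + (⌊(x - c) / w⌋ + 1) * w := by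
  have := mul_lt_mul_of_pos_right (Int.lt_floor_add_one ((x - c) / w)) hw
  rw [div_mul_cancel₀ _ hw.ne'] at this
  linarith

lemma exists_grid_mem_uIcc_of_floor_ne (hw : 0 < w) {x y : ℝ}
    (hxy : ⌊(x - c) / w⌋ ≠ ⌊(y - c) / w⌋) : ∃ i : ℤ, c + i * w ∈ Set.uIcc x y := by
  wlog hlt : ⌊(x - c) / w⌋ < ⌊(y - c) / w⌋ generalizing x y
  · obtain ⟨i, hi⟩ := this hxy.symm (hxy.lt_or_gt.resolve_left hlt)
    exact ⟨i, Set.uIcc_comm x y ▸ hi⟩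
  refine ⟨⌊(y - c) / w⌋, Set.mem_uIcc_of_le ?_ (grid_floor_mul_le hw y)⟩
  have hfloor : (⌊(x - c) / w⌋ + 1 : ℝ) ≤ ⌊(y - c) / w⌋ := by exact_mod_cast hlt
  nlinarith [lt_grid_floor_add_one_mul (c := c) hw x]

lemma mem_Ioo_grid_floor (hw : 0 < w) {x : ℝ} (hx : ∀ i : ℤ, x ≠ c + i * w) :
    x ∈ Set.Ioo (c + ⌊(x - c) / w⌋ * w) (c + (⌊(x - c) / w⌋ + 1) * w) :=
  ⟨(grid_floor_mul_le hw x).lt_of_ne (hx _).symm, lt_grid_floor_add_one_mul hw x⟩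

end Grid

/-- For a unit-disk instance with radius `r`, the grid projections `S₂` together
with feasible solutions of all cell sub-instances form a feasible solution for `(P,D)`. -/
theorem stmt19 (r : ℝ) (hr : 0 < r) (P : Finset Pt) (D : Finset Dem)
    (hD : ∀ d : Dem, d ∈ D ↔
      (d.1 ∈ P ∧ d.2 ∈ P ∧ d.1.1 < d.2.1 ∧ dist1 d.1 d.2 ≤ r))
    (a b : ℝ)
    (hgrid : ∀ p ∈ P,
      (∀ i : ℤ, p.1 ≠ a + i * (r / 2)) ∧ (∀ j : ℤ, p.2 ≠ b + j * (r / 2)))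
    (cell : ℤ → ℤ → Set Pt)
    (hcell : ∀ i j : ℤ, cell i j =
      {z : Pt | a + i * (r / 2) < z.1 ∧ z.1 < a + (i + 1) * (r / 2) ∧
                b + j * (r / 2) < z.2 ∧ z.2 < b + (j + 1) * (r / 2)})
    (S2 : Set Pt)
    (hS2 : S2 = {z : Pt | ∃ p ∈ P,
      (∃ i : ℤ, z = (a + i * (r / 2), p.2) ∧ |p.1 - (a + i * (r / 2))| ≤ r) ∨
      (∃ j : ℤ, z = (p.1, b + j * (r / 2)) ∧ |p.2 - (b + j * (r / 2))| ≤ r)})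
    (Qc : ℤ → ℤ → Set Pt)
    (hQc : ∀ i j : ℤ, (∃ p ∈ P, (p : Pt) ∈ cell i j) →
      MFeasible (↑P ∩ cell i j) {d : Dem | d ∈ D ∧ d.1 ∈ cell i j ∧ d.2 ∈ cell i j}
        (Qc i j)) :
    MFeasible ↑P ↑D
      (S2 ∪ ⋃ (i : ℤ) (j : ℤ) (_ : ∃ p ∈ P, (p : Pt) ∈ cell i j), Qc i j) := by
  intro d hd
  obtain ⟨hp, hq, -, hdist⟩ := (hD d).1 hd
  have hw : 0 < r / 2 := half_pos hr
  set U := ⋃ (i : ℤ) (j : ℤ) (_ : ∃ p ∈ P, (p : Pt) ∈ cell i j), Qc i j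
  have hPT : (P : Set Pt) ⊆ P ∪ (S2 ∪ U) := Set.subset_union_left
  have hS2T : S2 ⊆ P ∪ (S2 ∪ U) := Set.subset_union_left.trans Set.subset_union_right
  by_cases hx : ⌊(d.1.1 - a) / (r / 2)⌋ = ⌊(d.2.1 - a) / (r / 2)⌋
  · by_cases hy : ⌊(d.1.2 - b) / (r / 2)⌋ = ⌊(d.2.2 - b) / (r / 2)⌋
    · have hmem : ∀ z ∈ P, z ∈ cell ⌊(z.1 - a) / (r / 2)⌋ ⌊(z.2 - b) / (r / 2)⌋ := fun z hz => by
        rw [hcell]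
        have hx := mem_Ioo_grid_floor hw (hgrid z hz).1
        exact ⟨hx.1, hx.2, mem_Ioo_grid_floor hw (hgrid z hz).2⟩
      have hpc := hmem d.1 hp
      have hqc := hmem d.2 hq
      rw [← hx, ← hy] at hqc
      have hne : ∃ z ∈ P, z ∈ cell _ _ := ⟨d.1, hp, hpc⟩
      refine (hQc _ _ hne d ⟨hd, hpc, hqc⟩).mono (Set.union_subset_union Set.inter_subset_left ?_)
      exact fun z hz => Or.inr (Set.mem_iUnion₂.2 ⟨_, _, Set.mem_iUnion.2 ⟨hne, hz⟩⟩)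
    · obtain ⟨j, hj⟩ := exists_grid_mem_uIcc_of_floor_ne hw hy
      have hle := abs_snd_sub_le_dist1_of_mem_uIcc hj
      refine mconnected_via_horizontal hj (hPT hp) (hPT hq) (hS2T ?_) (hS2T ?_) <;> rw [hS2]
      · exact ⟨d.1, hp, Or.inr ⟨j, rfl, (hle.1.trans hdist)⟩⟩
      · exact ⟨d.2, hq, Or.inr ⟨j, rfl, (hle.2.trans hdist)⟩⟩
  · obtain ⟨i, hi⟩ := exists_grid_mem_uIcc_of_floor_ne hw hx
    have hle := abs_fst_sub_le_dist1_of_mem_uIcc hi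
    refine mconnected_via_vertical hi (hPT hp) (hPT hq) (hS2T ?_) (hS2T ?_) <;> rw [hS2]
    · exact ⟨d.1, hp, Or.inl ⟨i, rfl, (hle.1.trans hdist)⟩⟩
    · exact ⟨d.2, hq, Or.inl ⟨i, rfl, (hle.2.trans hdist)⟩⟩
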